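/- Let Λ > 0, c = √(2Λ), λ = √(Λ/18), and on the domain 0 < x < π/c define a(t,x) = e^{λ t} (sin(c x))^{1/6}, b(t,x) = e^{−λ t} (sin(c x))^{1/6}, φ(x) = √(5/6) ln(tan(c x / 2)). Set L1 = (∂_t a)/a, L2 = (∂_t b)/b, L3 = (∂_x a)/a, L4 = (∂_x b)/b. Then L1² + 3 L1 L2 + L2² − (1/6)(∂_t φ)² − [L3² + 3 L3 L4 + L4² − (1/6)(∂_x φ)²] = (2/9) Λ. -/

import Mathlib

/-!
The logarithmic derivatives are explicit: `L1 = λ`, `L2 = -λ`, `L3 = L4 = (c/6) cot (c x)`, and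
`∂ₓφ = √(5/6) c / sin (c x)` because `d/du log tan (u/2) = 1 / sin u`. The time part of the
constraint is then `-λ² = -Λ/18`, and since `cot² - 1/sin² = -1` the space part is
`-5c²/36 = -5Λ/18`.
-/

open Real

theorem logDeriv_exp_comp {f : ℝ → ℝ} {x : ℝ} (hf : DifferentiableAt ℝ f x) :
    logDeriv (fun s => exp (f s)) x = deriv f x := by
  rw [logDeriv_apply, hf.hasDerivAt.exp.deriv, mul_div_cancel_left₀ _ (exp_ne_zero _)]

theorem logDeriv_rpow_const {f : ℝ → ℝ} {x : ℝ} (p : ℝ) (hf : DifferentiableAt ℝ f x)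
    (hfx : 0 < f x) : logDeriv (fun y => f y ^ p) x = p * logDeriv f x := by
  rw [logDeriv_apply, logDeriv_apply, (hf.hasDerivAt.rpow_const (Or.inl hfx.ne')).deriv,
    rpow_sub_one hfx.ne']
  field_simp

theorem logDeriv_sin_const_mul (c x : ℝ) :
    logDeriv (fun y => sin (c * y)) x = c * cot (c * x) := by
  rw [logDeriv_apply, ((hasDerivAt_id' x).const_mul c).sin.deriv, cot_eq_cos_div_sin]
  ring

theorem logDeriv_exp_const_mul_mul_const (r : ℝ) {K : ℝ} (hK : K ≠ 0) (t : ℝ) :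
    logDeriv (fun s => exp (r * s) * K) t = r := by
  rw [logDeriv_mul_const t K hK, logDeriv_exp_comp (by fun_prop)]
  simp

theorem logDeriv_const_mul_sin_const_mul_rpow {E : ℝ} (hE : E ≠ 0) (c p : ℝ) {x : ℝ}
    (hx : 0 < sin (c * x)) :
    logDeriv (fun y => E * sin (c * y) ^ p) x = p * (c * cot (c * x)) := by
  rw [logDeriv_const_mul x E hE,
    logDeriv_rpow_const (f := fun y => sin (c * y)) p (by fun_prop) hx, logDeriv_sin_const_mul]

theorem hasDerivAt_log_tan_half {u : ℝ} (hu : sin u ≠ 0) :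
    HasDerivAt (fun v => log (tan (v / 2))) (1 / sin u) u := by
  have hsin2 : sin u = 2 * sin (u / 2) * cos (u / 2) := by
    rw [← sin_two_mul, mul_div_cancel₀ _ two_ne_zero]
  have hs : sin (u / 2) ≠ 0 := fun h => hu (by rw [hsin2, h]; ring)
  have hc : cos (u / 2) ≠ 0 := fun h => hu (by rw [hsin2, h]; ring)
  have htan : tan (u / 2) ≠ 0 := by rw [tan_eq_sin_div_cos]; exact div_ne_zero hs hc
  have hhalf : HasDerivAt (fun v => v / 2) (1 / 2) u := (hasDerivAt_id' u).div_const 2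
  have htan_half := (Real.hasDerivAt_tan hc).comp u hhalf
  refine (htan_half.log htan).congr_deriv ?_
  rw [Function.comp_apply, hsin2, tan_eq_sin_div_cos]
  field_simp

theorem classE0_constraint_equation_general
    (Λ : ℝ) (c lam : ℝ)
    (hc : c = Real.sqrt (2 * Λ)) (hlam : lam = Real.sqrt (Λ / 18))
    (a b : ℝ → ℝ → ℝ) (φ : ℝ → ℝ)
    (ha : ∀ t x, a t x = Real.exp (lam * t) * Real.sin (c * x) ^ ((1:ℝ)/6))
    (hb : ∀ t x, b t x = Real.exp (-(lam * t)) * Real.sin (c * x) ^ ((1:ℝ)/6))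
    (hφ : ∀ x, φ x = Real.sqrt (5/6) * Real.log (Real.tan (c * x / 2)))
    (t x : ℝ) (hx0 : 0 < x) (hxπ : x < π / c)
    (L1 L2 L3 L4 : ℝ)
    (hL1 : L1 = deriv (fun s => a s x) t / a t x)
    (hL2 : L2 = deriv (fun s => b s x) t / b t x)
    (hL3 : L3 = deriv (fun y => a t y) x / a t x)
    (hL4 : L4 = deriv (fun y => b t y) x / b t x) :
    L1 ^ 2 + 3 * L1 * L2 + L2 ^ 2 - (1/6) * (deriv (fun _ : ℝ => φ x) t) ^ 2
      - (L3 ^ 2 + 3 * L3 * L4 + L4 ^ 2 - (1/6) * (deriv φ x) ^ 2)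
    = (2/9) * Λ := by
  have hc0 : 0 < c := (div_pos_iff_of_pos_left pi_pos).mp (hx0.trans hxπ)
  have hcx : c * x < π := by rwa [lt_div_iff₀' hc0] at hxπ
  have hsin : 0 < sin (c * x) := sin_pos_of_pos_of_lt_pi (by positivity) hcx
  have hsinp : sin (c * x) ^ ((1:ℝ)/6) ≠ 0 := (rpow_pos_of_pos hsin _).ne'
  obtain rfl : a = fun t x => exp (lam * t) * sin (c * x) ^ ((1:ℝ)/6) := funext₂ ha
  obtain rfl : b = fun t x => exp (-(lam * t)) * sin (c * x) ^ ((1:ℝ)/6) := funext₂ hb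
  simp only [← neg_mul] at hL2 hL4
  have h1 : L1 = lam := hL1.trans (logDeriv_exp_const_mul_mul_const lam hsinp t)
  have h2 : L2 = -lam := hL2.trans (logDeriv_exp_const_mul_mul_const (-lam) hsinp t)
  have h3 := hL3.trans (logDeriv_const_mul_sin_const_mul_rpow (exp_ne_zero _) c (1/6) hsin)
  have h4 := hL4.trans (logDeriv_const_mul_sin_const_mul_rpow (exp_ne_zero _) c (1/6) hsin)
  have hφx : deriv φ x = √(5/6) * (1 / sin (c * x) * (c * 1)) := by
    rw [funext hφ]
    have hlog_tan := (hasDerivAt_log_tan_half hsin.ne').comp x ((hasDerivAt_id' x).const_mul c)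
    exact (hlog_tan.const_mul _).deriv
  rw [h1, h2, h3, h4, hφx, deriv_const, cot_eq_cos_div_sin]
  have hΛ : 0 < 2 * Λ := sqrt_pos.mp (hc ▸ hc0)
  have hlam2 : lam ^ 2 = Λ / 18 := by rw [hlam, sq_sqrt (by linarith)]
  have hc2 : c ^ 2 = 2 * Λ := by rw [hc, sq_sqrt hΛ.le]
  have hk2 : √(5/6) ^ 2 = 5/6 := sq_sqrt (by norm_num)
  have hpyth := sin_sq_add_cos_sq (c * x)
  field_simp
  linear_combination (-324 * sin (c * x) ^ 2) * hlam2 + 45 * sin (c * x) ^ 2 * hc2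
    + 54 * c ^ 2 * hk2 - 45 * c ^ 2 * hpyth

/-- The Einstein constraint equation ("first integral") for the Class `E₀`
solution: with `c = √(2Λ)`, `λ = √(Λ/18)`, `a = e^{λt}(sin cx)^{1/6}`,
`b = e^{−λt}(sin cx)^{1/6}`, `φ = √(5/6) ln tan(cx/2)`, and logarithmic
derivatives `L1 = ∂_t a/a`, `L2 = ∂_t b/b`, `L3 = ∂_x a/a`, `L4 = ∂_x b/b`,
one has `L1² + 3L1L2 + L2² − (1/6)(∂_t φ)² − [L3² + 3L3L4 + L4² − (1/6)(∂_x φ)²]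
= (2/9)Λ` on `0 < x < π/c`. -/
theorem classE0_constraint_equation
    (Λ : ℝ) (hΛ : 0 < Λ) (c lam : ℝ)
    (hc : c = Real.sqrt (2 * Λ)) (hlam : lam = Real.sqrt (Λ / 18))
    (a b : ℝ → ℝ → ℝ) (φ : ℝ → ℝ)
    (ha : ∀ t x, a t x = Real.exp (lam * t) * Real.sin (c * x) ^ ((1:ℝ)/6))
    (hb : ∀ t x, b t x = Real.exp (-(lam * t)) * Real.sin (c * x) ^ ((1:ℝ)/6))
    (hφ : ∀ x, φ x = Real.sqrt (5/6) * Real.log (Real.tan (c * x / 2)))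
    (t x : ℝ) (hx0 : 0 < x) (hxπ : x < π / c)
    (L1 L2 L3 L4 : ℝ)
    (hL1 : L1 = deriv (fun s => a s x) t / a t x)
    (hL2 : L2 = deriv (fun s => b s x) t / b t x)
    (hL3 : L3 = deriv (fun y => a t y) x / a t x)
    (hL4 : L4 = deriv (fun y => b t y) x / b t x) :
    L1 ^ 2 + 3 * L1 * L2 + L2 ^ 2 - (1/6) * (deriv (fun _ : ℝ => φ x) t) ^ 2
      - (L3 ^ 2 + 3 * L3 * L4 + L4 ^ 2 - (1/6) * (deriv φ x) ^ 2)
    = (2/9) * Λ :=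
  classE0_constraint_equation_general Λ c lam hc hlam a b φ ha hb hφ t x hx0 hxπ L1 L2 L3 L4 hL1 hL2
    hL3 hL4
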